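/- Let P be a lazy reversible irreducible Markov chain on a finite state space V. Then the total variation mixing time satisfies T_mix(1/4) ≤ 2·max_{x,y∈V} E_y(τ_x), where τ_x is the hitting time of x. -/

import Mathlib

open Finset
set_option linter.unusedSectionVars false

namespace MixHit

variable {V : Type*} [Fintype V] [DecidableEq V]
variable (P : Matrix V V ℝ) (π : V → ℝ)

/-- action of `P` on functions -/
def T (f : V → ℝ) : V → ℝ := fun z => ∑ w, P z w * f w

/-- the `π`-weighted inner product -/
def ip (f g : V → ℝ) : ℝ := ∑ z, π z * (f z * g z)

lemma stat (hrow : ∀ x, ∑ y, P x y = 1) (hrev : ∀ x y, π x * P x y = π y * P y x)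
    (z : V) : ∑ y, π y * P y z = π z := by
  calc ∑ y, π y * P y z = ∑ y, π z * P z y := sum_congr rfl fun y _ => hrev y z
    _ = π z := by rw [← mul_sum, hrow, mul_one]

lemma rowsumPow (hrow : ∀ x, ∑ y, P x y = 1) (s : ℕ) (z : V) :
    ∑ w, (P ^ s) z w = 1 := by
  induction s generalizing z with
  | zero => simp [Matrix.one_apply]
  | succ n ih =>
      simp only [pow_succ, Matrix.mul_apply]
      rw [sum_comm]
      simp only [← mul_sum, hrow, mul_one]
      exact ih z

lemma statPow (hrow : ∀ x, ∑ y, P x y = 1) (hrev : ∀ x y, π x * P x y = π y * P y x)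
    (s : ℕ) (z : V) : ∑ y, π y * (P ^ s) y z = π z := by
  induction s generalizing z with
  | zero => simp [Matrix.one_apply]
  | succ n ih =>
      simp only [pow_succ, Matrix.mul_apply]
      have key : ∀ y, π y * ∑ w, (P ^ n) y w * P w z
          = ∑ w, (π y * (P ^ n) y w) * P w z := by
        intro y; rw [mul_sum]; exact sum_congr rfl fun w _ => by ring
      simp only [key]
      rw [sum_comm]
      simp only [← sum_mul, ih]
      exact stat P π hrow hrev z

lemma revPow (hrev : ∀ x y, π x * P x y = π y * P y x) (s : ℕ) (y z : V) :
    π y * (P ^ s) y z = π z * (P ^ s) z y := by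
  induction s generalizing y z with
  | zero =>
      simp only [pow_zero, Matrix.one_apply]
      by_cases hyz : y = z
      · subst hyz; rfl
      · rw [if_neg hyz, if_neg (Ne.symm hyz)]; ring
  | succ n ih =>
      conv_lhs => rw [pow_succ]
      conv_rhs => rw [pow_succ']
      rw [Matrix.mul_apply, Matrix.mul_apply, mul_sum, mul_sum]
      refine sum_congr rfl fun w _ => ?_
      calc π y * ((P ^ n) y w * P w z) = ((π y * (P ^ n) y w) * P w z) := by ring
        _ = (π w * (P ^ n) w y) * P w z := by rw [ih]
        _ = (π w * P w z) * (P ^ n) w y := by ring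
        _ = (π z * P z w) * (P ^ n) w y := by rw [hrev w z]
        _ = π z * (P z w * (P ^ n) w y) := by ring

lemma T_pow_apply (s : ℕ) (f : V → ℝ) (z : V) :
    ((T P)^[s] f) z = ∑ w, (P ^ s) z w * f w := by
  induction s generalizing f z with
  | zero => simp [Matrix.one_apply, ite_mul]
  | succ n ih =>
      rw [Function.iterate_succ_apply, ih]
      simp only [pow_succ, Matrix.mul_apply, T, mul_sum, sum_mul]
      rw [sum_comm]
      exact sum_congr rfl fun a _ => sum_congr rfl fun w _ => by ring

lemma adj (hrev : ∀ x y, π x * P x y = π y * P y x) (f g : V → ℝ) :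
    ip π (T P f) g = ip π f (T P g) := by
  simp only [ip, T]
  calc ∑ z, π z * ((∑ w, P z w * f w) * g z)
      = ∑ z, ∑ w, (π z * P z w) * (f w * g z) := by
        refine sum_congr rfl fun z _ => ?_
        rw [sum_mul, mul_sum]
        exact sum_congr rfl fun w _ => by ring
    _ = ∑ z, ∑ w, (π w * P w z) * (f w * g z) := by
        refine sum_congr rfl fun z _ => sum_congr rfl fun w _ => by rw [hrev]
    _ = ∑ w, π w * (f w * ∑ z, P w z * g z) := by
        rw [sum_comm]
        refine sum_congr rfl fun w _ => ?_
        rw [mul_sum, mul_sum]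
        exact sum_congr rfl fun z _ => by ring

lemma adj_pow (hrev : ∀ x y, π x * P x y = π y * P y x) (s : ℕ) (f g : V → ℝ) :
    ip π f ((T P)^[s] g) = ip π ((T P)^[s] f) g := by
  induction s generalizing f g with
  | zero => rfl
  | succ n ih =>
      rw [Function.iterate_succ_apply, ih, ← adj P π hrev,
        show T P ((T P)^[n] f) = (T P)^[n + 1] f from (Function.iterate_succ_apply' (T P) n f).symm]

lemma ip_move (hrev : ∀ x y, π x * P x y = π y * P y x) (a b : ℕ) (f g : V → ℝ) :
    ip π f ((T P)^[a + b] g) = ip π ((T P)^[a] f) ((T P)^[b] g) := by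
  rw [Function.iterate_add_apply, adj_pow P π hrev a]



lemma ip_self_nonneg (hπnn : ∀ z, 0 ≤ π z) (f : V → ℝ) : 0 ≤ ip π f f :=
  sum_nonneg fun z _ => mul_nonneg (hπnn z) (mul_self_nonneg _)

lemma qform_nonneg (R : Matrix V V ℝ) (hRnn : ∀ z w, 0 ≤ R z w)
    (hRrow : ∀ z, ∑ w, R z w = 1) (hRstat : ∀ w, ∑ z, π z * R z w = π w)
    (hπnn : ∀ z, 0 ≤ π z) (g : V → ℝ) (c : ℝ) :
    0 ≤ (1 + c ^ 2) * (∑ z, π z * (g z * g z))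
        + 2 * c * (∑ z, π z * (g z * (∑ w, R z w * g w))) := by
  have e1 : ∀ z : V, ∀ w : V, π z * R z w * (g z + c * g w) ^ 2
      = π z * R z w * (g z * g z) + c ^ 2 * (π z * R z w * (g w * g w))
        + 2 * c * (π z * (R z w * (g z * g w))) := fun z w => by ring
  have key : ∑ z, ∑ w, π z * R z w * (g z + c * g w) ^ 2
      = (1 + c ^ 2) * (∑ z, π z * (g z * g z))
        + 2 * c * (∑ z, π z * (g z * (∑ w, R z w * g w))) := by
    simp only [e1, sum_add_distrib]
    have h1 : ∑ z, ∑ w, π z * R z w * (g z * g z) = ∑ z, π z * (g z * g z) := by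
      refine sum_congr rfl fun z _ => ?_
      calc ∑ w, π z * R z w * (g z * g z) = (∑ w, R z w) * (π z * (g z * g z)) := by
            rw [sum_mul]; exact sum_congr rfl fun w _ => by ring
        _ = π z * (g z * g z) := by rw [hRrow, one_mul]
    have h2 : ∑ z, ∑ w, c ^ 2 * (π z * R z w * (g w * g w))
        = c ^ 2 * ∑ z, π z * (g z * g z) := by
      rw [sum_comm, mul_sum]
      refine sum_congr rfl fun w _ => ?_
      calc ∑ z, c ^ 2 * (π z * R z w * (g w * g w))
          = c ^ 2 * ((∑ z, π z * R z w) * (g w * g w)) := by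
            rw [sum_mul, mul_sum]
        _ = c ^ 2 * (π w * (g w * g w)) := by rw [hRstat]
    have h3 : ∑ z, ∑ w, 2 * c * (π z * (R z w * (g z * g w)))
        = 2 * c * ∑ z, π z * (g z * (∑ w, R z w * g w)) := by
      rw [mul_sum]
      refine sum_congr rfl fun z _ => ?_
      rw [mul_sum, mul_sum, mul_sum]
      exact sum_congr rfl fun w _ => by ring
    rw [h1, h2, h3]; ring
  rw [← key]
  refine sum_nonneg fun z _ => sum_nonneg fun w _ => ?_
  exact mul_nonneg (mul_nonneg (hπnn z) (hRnn z w)) (sq_nonneg _)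

/-- the matrix `Q = 2P - I` -/
def Qm : Matrix V V ℝ := fun z w => 2 * P z w - (if z = w then 1 else 0)

variable {P} in
lemma Qm_nonneg (hnn : ∀ x y, 0 ≤ P x y) (hlazy : ∀ x, 1 / 2 ≤ P x x) (z w : V) :
    0 ≤ Qm P z w := by
  unfold Qm
  by_cases hzw : z = w
  · subst hzw; rw [if_pos rfl]; have := hlazy z; linarith
  · rw [if_neg hzw]; have := hnn z w; linarith

variable {P} in
lemma Qm_row (hrow : ∀ x, ∑ y, P x y = 1) (z : V) : ∑ w, Qm P z w = 1 := by
  unfold Qm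
  rw [sum_sub_distrib, ← mul_sum, hrow, sum_ite_eq univ z (fun _ => (1:ℝ))]
  simp
  norm_num

variable {P} in
lemma Qm_stat (hrow : ∀ x, ∑ y, P x y = 1) (hrev : ∀ x y, π x * P x y = π y * P y x)
    (w : V) : ∑ z, π z * Qm P z w = π w := by
  unfold Qm
  have e : ∀ z, π z * (2 * P z w - (if z = w then 1 else 0))
      = 2 * (π z * P z w) - (if z = w then π z else 0) := by
    intro z; by_cases hzw : z = w <;> simp [hzw] <;> ring
  simp only [e]
  rw [sum_sub_distrib, ← mul_sum, stat P π hrow hrev, sum_ite_eq' univ w π]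
  simp
  ring

variable {P} in
lemma Qm_apply (g : V → ℝ) (z : V) :
    ∑ w, Qm P z w * g w = 2 * T P g z - g z := by
  unfold Qm T
  have e : ∀ w, (2 * P z w - (if z = w then 1 else 0)) * g w
      = 2 * (P z w * g w) - (if z = w then g w else 0) := by
    intro w; by_cases hzw : z = w <;> simp [hzw] <;> ring
  simp only [e]
  rw [sum_sub_distrib, ← mul_sum, sum_ite_eq univ z g]
  simp

lemma Q1 (hnn : ∀ x y, 0 ≤ P x y) (hrow : ∀ x, ∑ y, P x y = 1)
    (hrev : ∀ x y, π x * P x y = π y * P y x) (hπnn : ∀ z, 0 ≤ π z) (g : V → ℝ) :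
    ip π g (T P g) ≤ ip π g g := by
  have H := qform_nonneg π P hnn hrow (stat P π hrow hrev) hπnn g (-1)
  simp only [ip, T] at *
  nlinarith [H]

lemma Q2 (hnn : ∀ x y, 0 ≤ P x y) (hrow : ∀ x, ∑ y, P x y = 1)
    (hlazy : ∀ x, 1 / 2 ≤ P x x)
    (hrev : ∀ x y, π x * P x y = π y * P y x) (hπnn : ∀ z, 0 ≤ π z) (g : V → ℝ) :
    0 ≤ ip π g (T P g) := by
  have H := qform_nonneg π (Qm P) (Qm_nonneg hnn hlazy) (Qm_row hrow)
    (Qm_stat π hrow hrev) hπnn g 1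
  have e : ∑ z, π z * (g z * (∑ w, Qm P z w * g w))
      = 2 * ip π g (T P g) - ip π g g := by
    have e2 : ∀ z, π z * (g z * (∑ w, Qm P z w * g w))
        = 2 * (π z * (g z * T P g z)) - π z * (g z * g z) := by
      intro z; rw [Qm_apply]; ring
    simp only [e2]
    rw [sum_sub_distrib, ← mul_sum]
    rfl
  rw [e] at H
  have hself := ip_self_nonneg π hπnn g
  unfold ip at *
  nlinarith [H]

lemma Qcontract (hnn : ∀ x y, 0 ≤ P x y) (hrow : ∀ x, ∑ y, P x y = 1)
    (hlazy : ∀ x, 1 / 2 ≤ P x x)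
    (hrev : ∀ x y, π x * P x y = π y * P y x) (hπnn : ∀ z, 0 ≤ π z) (g : V → ℝ) :
    ip π (fun z => 2 * T P g z - g z) (fun z => 2 * T P g z - g z) ≤ ip π g g := by
  have point : ∀ z, (2 * T P g z - g z) * (2 * T P g z - g z)
      ≤ ∑ w, Qm P z w * (g w * g w) := by
    intro z
    have hcs := sum_sq_le_sum_mul_sum_of_sq_eq_mul (univ : Finset V)
      (r := fun w => Qm P z w * g w) (f := fun w => Qm P z w)
      (g := fun w => Qm P z w * (g w * g w))
      (fun w _ => Qm_nonneg hnn hlazy z w)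
      (fun w _ => mul_nonneg (Qm_nonneg hnn hlazy z w) (mul_self_nonneg _))
      (fun w _ => by ring)
    rw [Qm_row hrow, one_mul] at hcs
    calc (2 * T P g z - g z) * (2 * T P g z - g z)
        = (∑ w, Qm P z w * g w) ^ 2 := by rw [Qm_apply]; ring
      _ ≤ ∑ w, Qm P z w * (g w * g w) := hcs
  unfold ip
  calc ∑ z, π z * ((2 * T P g z - g z) * (2 * T P g z - g z))
      ≤ ∑ z, π z * ∑ w, Qm P z w * (g w * g w) := by
        exact sum_le_sum fun z _ => mul_le_mul_of_nonneg_left (point z) (hπnn z)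
    _ = ∑ w, π w * (g w * g w) := by
        simp only [mul_sum]
        rw [sum_comm]
        refine sum_congr rfl fun w _ => ?_
        calc ∑ z, π z * (Qm P z w * (g w * g w))
            = (∑ z, π z * Qm P z w) * (g w * g w) := by
              rw [sum_mul]; exact sum_congr rfl fun z _ => by ring
          _ = π w * (g w * g w) := by rw [Qm_stat π hrow hrev]

lemma Q3 (hnn : ∀ x y, 0 ≤ P x y) (hrow : ∀ x, ∑ y, P x y = 1)
    (hlazy : ∀ x, 1 / 2 ≤ P x x)
    (hrev : ∀ x y, π x * P x y = π y * P y x) (hπnn : ∀ z, 0 ≤ π z) (g : V → ℝ) :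
    ip π g (T P (T P g)) ≤ ip π g (T P g) := by
  have hadj : ip π g (T P (T P g)) = ip π (T P g) (T P g) := by
    rw [adj P π hrev g (T P g)]
  have hc := Qcontract P π hnn hrow hlazy hrev hπnn g
  have expand : ip π (fun z => 2 * T P g z - g z) (fun z => 2 * T P g z - g z)
      = 4 * ip π (T P g) (T P g) - 4 * ip π g (T P g) + ip π g g := by
    unfold ip
    have e : ∀ z, π z * ((2 * T P g z - g z) * (2 * T P g z - g z))
        = 4 * (π z * (T P g z * T P g z)) - 4 * (π z * (g z * T P g z))
          + π z * (g z * g z) := fun z => by ring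
    simp only [e, sum_add_distrib, sum_sub_distrib, ← mul_sum]
  rw [expand] at hc
  linarith [hadj, hc]

end MixHit


open MixHit Finset

set_option maxHeartbeats 1000000 in
/-- For a lazy reversible irreducible Markov chain on a finite state space,
`T_mix(1/4) ≤ 2·max_{x,y} E_y(τ_x)`: for every time `t` with
`t ≥ 2 E_y(τ_x)` for all `x,y`, the total variation distance of `p^t(x,·)` to
the stationary distribution `π` is at most `1/4` for every starting state `x`.
Here `h x y = E_y(τ_x)` is characterized by the usual hitting time system. -/
theorem mixing_time_le_two_max_hitting
    {V : Type*} [Fintype V] [DecidableEq V] [Nonempty V]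
    (P : Matrix V V ℝ) (π : V → ℝ)
    (hnn : ∀ x y, 0 ≤ P x y) (hrow : ∀ x, ∑ y, P x y = 1)
    (hlazy : ∀ x, 1 / 2 ≤ P x x)
    (hπpos : ∀ x, 0 < π x) (hπsum : ∑ x, π x = 1)
    (hrev : ∀ x y, π x * P x y = π y * P y x)
    (hirr : ∀ x y, ∃ t : ℕ, 0 < (P ^ t) x y)
    (h : V → V → ℝ)
    (hxx : ∀ x, h x x = 0)
    (hrec : ∀ x y, y ≠ x → h x y = 1 + ∑ z, P y z * h x z) :
    ∀ t : ℕ, (∀ x y, 2 * h x y ≤ (t : ℝ)) →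
      ∀ x : V, (1 / 2) * ∑ y, |(P ^ t) x y - π y| ≤ 1 / 4 := by
  intro t ht x
  have hπnn : ∀ z, 0 ≤ π z := fun z => (hπpos z).le
  have hπx : π x ≠ 0 := (hπpos x).ne'
  -- Kac's formula
  have hKac : π x * (1 + ∑ z, P x z * h x z) = 1 := by
    have key : ∀ y, π y * h x y
        = π y * 1 + π y * (∑ z, P y z * h x z)
          - (if y = x then π x * (1 + ∑ z, P x z * h x z) else 0) := by
      intro y
      by_cases hy : y = x
      · subst hy; rw [if_pos rfl, hxx]; ring
      · rw [if_neg hy, hrec x y hy]; ring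
    have swap : ∑ y, π y * ∑ z, P y z * h x z = ∑ y, π y * h x y := by
      have e : ∀ y, π y * ∑ z, P y z * h x z = ∑ z, (π y * P y z) * h x z := by
        intro y; rw [mul_sum]; exact sum_congr rfl fun z _ => by ring
      simp only [e]
      rw [sum_comm]
      refine sum_congr rfl fun z _ => ?_
      rw [← sum_mul, stat P π hrow hrev z]
    have H : ∑ y, π y * h x y
        = (∑ y, π y * 1) + (∑ y, π y * ∑ z, P y z * h x z)
          - π x * (1 + ∑ z, P x z * h x z) := by
      calc ∑ y, π y * h x y
          = ∑ y, (π y * 1 + π y * (∑ z, P y z * h x z)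
            - (if y = x then π x * (1 + ∑ z, P x z * h x z) else 0)) :=
            sum_congr rfl fun y _ => key y
        _ = (∑ y, π y * 1) + (∑ y, π y * ∑ z, P y z * h x z)
            - π x * (1 + ∑ z, P x z * h x z) := by
            rw [sum_sub_distrib, sum_add_distrib,
              sum_ite_eq' univ x (fun _ => π x * (1 + ∑ z, P x z * h x z))]
            simp
    have hone : ∑ y, π y * 1 = 1 := by simp [hπsum]
    rw [swap, hone] at H
    linarith [H]
  -- the functions v and u
  set v : V → ℝ := fun z => -(h x z) with hv
  set u : V → ℝ := fun z => (if z = x then 1 / π x else 0) - 1 with hu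
  have huv : u = fun z => v z - T P v z := by
    funext z
    have hTv : T P v z = -(∑ w, P z w * h x w) := by
      simp [MixHit.T, hv, mul_neg, ← sum_neg_distrib]
    by_cases hz : z = x
    · subst hz
      rw [hu]; simp only [if_pos rfl, hv, hTv, hxx]
      field_simp
      have hTv' : T P (fun z_1 => -h z z_1) z = -∑ w, P z w * h z w := hTv
      rw [hTv', if_pos trivial]
      have hdiv : 1 / π z = 1 + ∑ w, P z w * h z w := by
        rw [div_eq_iff hπx]; linarith [hKac]
      linarith [hdiv]
    · rw [hu]; simp only [if_neg hz, hv, hTv]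
      have := hrec x z hz
      linarith [this]
  set d : ℕ → ℝ := fun s => ip π u ((T P)^[s] u) with hd
  set e : ℕ → ℝ := fun s => ip π u ((T P)^[s] v) with he
  have hTsub : ∀ f g : V → ℝ,
      T P (fun z => f z - g z) = fun z => T P f z - T P g z := by
    intro f g; funext z; simp [MixHit.T, mul_sub, sum_sub_distrib]
  have hTnu : ∀ s, (T P)^[s] u = fun z => ((T P)^[s] v) z - ((T P)^[s+1] v) z := by
    intro s; induction s with
    | zero => simpa using huv
    | succ n ih =>
        calc (T P)^[n+1] u = T P ((T P)^[n] u) := Function.iterate_succ_apply' _ _ _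
          _ = T P (fun z => ((T P)^[n] v) z - ((T P)^[n+1] v) z) := by rw [ih]
          _ = fun z => (T P ((T P)^[n] v)) z - (T P ((T P)^[n+1] v)) z := hTsub _ _
          _ = fun z => ((T P)^[n+1] v) z - ((T P)^[n+2] v) z := by
              funext z
              rw [← Function.iterate_succ_apply' (T P) n v,
                ← Function.iterate_succ_apply' (T P) (n+1) v]
  have hip_sub : ∀ (f g k : V → ℝ),
      ip π f (fun z => g z - k z) = ip π f g - ip π f k := by
    intro f g k; simp [MixHit.ip, mul_sub, sum_sub_distrib]
  have hip_subl : ∀ (f g k : V → ℝ),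
      ip π (fun z => f z - g z) k = ip π f k - ip π g k := by
    intro f g k; simp [MixHit.ip, sub_mul, mul_sub, sum_sub_distrib]
  have hde : ∀ s, d s = e s - e (s+1) := by
    intro s; simp only [hd, he]; rw [hTnu s, hip_sub]
  have he0 : e 0 = ∑ z, π z * h x z := by
    simp only [he, Function.iterate_zero, id_eq]
    unfold MixHit.ip
    refine sum_congr rfl fun z _ => ?_
    by_cases hz : z = x
    · subst hz; simp [hu, hv, hxx]
    · simp only [hu, hv, if_neg hz]; ring
  have hπu1 : ∀ z, π z * u z = (if z = x then (1:ℝ) else 0) - π z := by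
    intro z; simp only [hu]
    by_cases hz : z = x
    · subst hz; rw [if_pos rfl, if_pos rfl]; field_simp
    · rw [if_neg hz, if_neg hz]; ring
  have hπu : ∑ z, π z * u z = 0 := by
    simp only [hπu1]
    rw [sum_sub_distrib, sum_ite_eq' univ x (fun _ => (1:ℝ)), hπsum]
    simp
  have hbridge : ∀ s : ℕ, d s = (P ^ s) x x / π x - 1 := by
    intro s
    have hTnuz : ∀ z, ((T P)^[s] u) z = (P ^ s) z x / π x - 1 := by
      intro z
      rw [T_pow_apply]
      have e1 : ∀ w, (P ^ s) z w * u w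
          = (if w = x then (P ^ s) z x * (1 / π x) else 0) - (P ^ s) z w := by
        intro w; simp only [hu]
        by_cases hw : w = x
        · subst hw; rw [if_pos rfl, if_pos rfl]; ring
        · rw [if_neg hw, if_neg hw]; ring
      simp only [e1]
      rw [sum_sub_distrib, sum_ite_eq' univ x (fun _ => (P ^ s) z x * (1 / π x)),
        rowsumPow P hrow s z]
      simp [mul_one_div, div_eq_mul_inv]
    simp only [hd]
    unfold MixHit.ip
    have e2 : ∀ z, π z * (u z * (((T P)^[s] u) z))
        = (π z * u z) * ((P ^ s) z x / π x) - π z * u z := by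
      intro z; rw [hTnuz z]; ring
    simp only [e2]
    rw [sum_sub_distrib, hπu, sub_zero]
    have e3 : ∀ z, (π z * u z) * ((P ^ s) z x / π x)
        = (if z = x then (P ^ s) x x / π x else 0) - π z * (P ^ s) z x / π x := by
      intro z; rw [hπu1 z]
      by_cases hz : z = x
      · subst hz; rw [if_pos rfl, if_pos rfl]; ring
      · rw [if_neg hz, if_neg hz]; ring
    simp only [e3]
    rw [sum_sub_distrib, sum_ite_eq' univ x (fun _ => (P ^ s) x x / π x)]
    have e4 : ∑ z, π z * (P ^ s) z x / π x = 1 := by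
      rw [← sum_div, statPow P π hrow hrev s x, div_self hπx]
    rw [e4]
    simp
  have hmono : ∀ s, d (s + 1) ≤ d s := by
    intro s
    rcases Nat.even_or_odd s with ⟨r, hr⟩ | ⟨r, hr⟩
    · subst hr
      have h1 : d (r + r) = ip π ((T P)^[r] u) ((T P)^[r] u) := by
        simp only [hd]; rw [ip_move P π hrev r r u u]
      have h2 : d (r + r + 1) = ip π ((T P)^[r] u) (T P ((T P)^[r] u)) := by
        simp only [hd]
        rw [show r + r + 1 = r + (r + 1) by omega, ip_move P π hrev r (r+1) u u,
          Function.iterate_succ_apply' (T P) r u]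
      rw [h1, h2]
      exact Q1 P π hnn hrow hrev hπnn _
    · rw [hr]
      have h1 : d (2 * r + 1) = ip π ((T P)^[r] u) (T P ((T P)^[r] u)) := by
        simp only [hd]
        rw [show 2 * r + 1 = r + (r + 1) by omega, ip_move P π hrev r (r+1) u u,
          Function.iterate_succ_apply' (T P) r u]
      have h2 : d (2 * r + 1 + 1) = ip π ((T P)^[r] u) (T P (T P ((T P)^[r] u))) := by
        simp only [hd]
        rw [show 2 * r + 1 + 1 = r + (r + 2) by omega, ip_move P π hrev r (r+2) u u,
          Function.iterate_succ_apply' (T P) (r+1) u,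
          Function.iterate_succ_apply' (T P) r u]
      rw [h1, h2]
      exact Q3 P π hnn hrow hlazy hrev hπnn _
  have hanti : ∀ a b : ℕ, a ≤ b → d b ≤ d a := by
    intro a b hab
    exact antitone_nat_of_succ_le hmono hab
  have hlast : 0 ≤ e (t + t + 1) := by
    have hEe : e (t + t + 1) = ip π ((T P)^[t] u) (T P ((T P)^[t] v)) := by
      simp only [he]
      rw [show t + t + 1 = t + (t + 1) by omega, ip_move P π hrev t (t+1) u v,
        Function.iterate_succ_apply' (T P) t v]
    set w : V → ℝ := (T P)^[t] v with hw
    have hTtu : (T P)^[t] u = fun z => w z - T P w z := by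
      rw [hTnu t, hw]
      funext z
      rw [Function.iterate_succ_apply' (T P) t v]
    rw [hEe, hTtu, hip_subl]
    have hadj : ip π (T P w) (T P w) = ip π w (T P (T P w)) := adj P π hrev w (T P w)
    have := Q3 P π hnn hrow hlazy hrev hπnn w
    linarith [hadj, this]
  have htel : ∑ s ∈ range (t + t + 1), d s = e 0 - e (t + t + 1) := by
    calc ∑ s ∈ range (t + t + 1), d s
        = ∑ s ∈ range (t + t + 1), (e s - e (s+1)) := sum_congr rfl fun s _ => hde s
      _ = e 0 - e (t + t + 1) := sum_range_sub' e (t + t + 1)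
  have hμ : e 0 ≤ (t : ℝ) / 2 := by
    rw [he0]
    calc ∑ z, π z * h x z ≤ ∑ z, π z * ((t : ℝ) / 2) :=
          sum_le_sum fun z _ =>
            mul_le_mul_of_nonneg_left (by linarith [ht x z]) (hπnn z)
      _ = (t : ℝ) / 2 := by rw [← sum_mul, hπsum, one_mul]
  have hcount : ((t + t + 1 : ℕ) : ℝ) * d (t + t) ≤ e 0 := by
    have h1 : ∀ s ∈ range (t + t + 1), d (t + t) ≤ d s := by
      intro s hs
      exact hanti s (t + t) (Nat.lt_succ_iff.mp (mem_range.mp hs))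
    have h2 := sum_le_sum h1
    rw [sum_const, card_range, nsmul_eq_mul] at h2
    calc ((t + t + 1 : ℕ) : ℝ) * d (t + t) ≤ ∑ s ∈ range (t + t + 1), d s := h2
      _ = e 0 - e (t + t + 1) := htel
      _ ≤ e 0 := by linarith [hlast]
  have hdtt : d (t + t) ≤ 1 / 4 := by
    have hc : ((t + t + 1 : ℕ) : ℝ) * d (t + t) ≤ (t : ℝ) / 2 := hcount.trans hμ
    push_cast at hc
    nlinarith [hc, Nat.cast_nonneg (α := ℝ) t]
  have hcs : (∑ y, |(P ^ t) x y - π y|) ^ 2 ≤ ∑ y, ((P ^ t) x y - π y) ^ 2 / π y := by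
    have H := sq_sum_div_le_sum_sq_div univ (fun y => |(P ^ t) x y - π y|)
      (fun y _ => hπpos y)
    rw [hπsum, div_one] at H
    simpa [sq_abs] using H
  have hident : ∑ y, ((P ^ t) x y - π y) ^ 2 / π y = (P ^ (t + t)) x x / π x - 1 := by
    have e1 : ∀ y, ((P ^ t) x y - π y) ^ 2 / π y
        = (P ^ t) x y * (P ^ t) y x / π x - 2 * (P ^ t) x y + π y := by
      intro y
      have hrv := revPow P π hrev t x y
      have hπy : π y ≠ 0 := (hπpos y).ne'
      have hyx : (P ^ t) y x = π x * (P ^ t) x y / π y := by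
        field_simp
        linarith [hrv]
      rw [hyx]
      field_simp
      ring
    simp only [e1]
    rw [sum_add_distrib, sum_sub_distrib, ← sum_div, ← mul_sum,
      rowsumPow P hrow t x, hπsum]
    have : ∑ y, (P ^ t) x y * (P ^ t) y x = (P ^ (t + t)) x x := by
      rw [pow_add, Matrix.mul_apply]
    rw [this]
    ring
  have hfinal : (∑ y, |(P ^ t) x y - π y|) ^ 2 ≤ 1 / 4 := by
    calc (∑ y, |(P ^ t) x y - π y|) ^ 2
        ≤ ∑ y, ((P ^ t) x y - π y) ^ 2 / π y := hcs
      _ = (P ^ (t + t)) x x / π x - 1 := hident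
      _ = d (t + t) := (hbridge (t + t)).symm
      _ ≤ 1 / 4 := hdtt
  have hS : 0 ≤ ∑ y, |(P ^ t) x y - π y| := sum_nonneg fun y _ => abs_nonneg _
  nlinarith [hfinal, hS]
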